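/- Let 0<s<1<p<∞ be fixed, let Ω⊂ℝⁿ be a bounded open set and let A⊂Ω be measurable with positive measure. If u∈W^{s,p}_A(Ω) is an extremal for λ_s(A), then u has constant sign: either u≥0 a.e. in Ω or u≤0 a.e. in Ω. More precisely, if both |{u>0}|>0 and |{u<0}|>0 then [|u|]_{s,p}^p < [u]_{s,p}^p, contradicting minimality. -/

import Mathlib

open MeasureTheory Filter Topology Set

noncomputable section

abbrev Euc (n : ℕ) := EuclideanSpace ℝ (Fin n)

/-- `p`-th power of the Gagliardo seminorm of `u` on `Ω`. -/
def gagliardo (n : ℕ) (s p : ℝ) (Ω : Set (Euc n)) (u : Euc n → ℝ) : ℝ :=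
  ∫ z in Ω ×ˢ Ω, |u z.1 - u z.2| ^ p / ‖z.1 - z.2‖ ^ ((n : ℝ) + s * p)

/-- `u` belongs to the fractional Sobolev space `W^{s,p}(Ω)`. -/
def inFracSobolev (n : ℕ) (s p : ℝ) (Ω : Set (Euc n)) (u : Euc n → ℝ) : Prop :=
  MemLp u (ENNReal.ofReal p) (volume.restrict Ω) ∧
  IntegrableOn
    (fun z : Euc n × Euc n => |u z.1 - u z.2| ^ p / ‖z.1 - z.2‖ ^ ((n : ℝ) + s * p))
    (Ω ×ˢ Ω) volume

/-- The set of admissible Rayleigh quotients defining the optimal Poincaré constant `λ_s(A)`. -/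
def lambdaSet (n : ℕ) (s p : ℝ) (Ω A : Set (Euc n)) : Set ℝ :=
  { r | ∃ u : Euc n → ℝ, inFracSobolev n s p Ω u ∧ (∀ᵐ x ∂(volume.restrict A), u x = 0) ∧
      0 < ∫ x in Ω, |u x| ^ p ∧ r = (gagliardo n s p Ω u / 2) / ∫ x in Ω, |u x| ^ p }

/-- The optimal Poincaré constant `λ_s(A)`. -/
def lambdaS (n : ℕ) (s p : ℝ) (Ω A : Set (Euc n)) : ℝ := sInf (lambdaSet n s p Ω A)

/-!
Replacing `u` by `|u|` keeps the constraint `u = 0` on `A` and the `L^p` norm, and does not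
increase the Gagliardo energy since `||a| - |b|| ≤ |a - b|`. When `a > 0 > b` this inequality is
strict, so if `u` takes both signs on sets `P`, `N` of positive measure, the energy of `|u|` is
strictly smaller on `P × N`. Then `|u|` has a strictly smaller Rayleigh quotient than the
extremal `u`, which is absurd.
-/

theorem abs_abs_sub_abs_lt_abs_sub {a b : ℝ} (ha : 0 < a) (hb : b < 0) :
    |(|a| - |b|)| < |a - b| := by
  rw [abs_of_pos ha, abs_of_neg hb, abs_of_pos (by linarith : 0 < a - b), abs_lt]
  constructor <;> linarith

theorem MeasureTheory.integral_lt_integral_of_ae_le_of_measure_setOf_lt_ne_zero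
    {α : Type*} [MeasurableSpace α] {μ : Measure α} {f g : α → ℝ}
    (hf : Integrable f μ) (hg : Integrable g μ) (hle : f ≤ᵐ[μ] g)
    (hlt : μ {x | f x < g x} ≠ 0) :
    ∫ x, f x ∂μ < ∫ x, g x ∂μ := by
  rw [← sub_pos, ← integral_sub hg hf,
    integral_pos_iff_support_of_nonneg_ae (hle.mono fun x => sub_nonneg.2) (hg.sub hf)]
  refine pos_iff_ne_zero.2 (mt (measure_mono_null fun x hx => ?_) hlt)
  exact (sub_pos.2 hx).ne'

theorem MeasureTheory.measure_pos_of_not_ae_restrict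
    {α : Type*} [MeasurableSpace α] {μ : Measure α} {s : Set α} {P : α → Prop}
    (hs : MeasurableSet s) (h : ¬ ∀ᵐ x ∂(μ.restrict s), P x) :
    0 < μ {x ∈ s | ¬ P x} := by
  rw [ae_restrict_iff' hs, ae_iff] at h
  simpa only [Classical.not_imp, pos_iff_ne_zero] using h

def gagliardoIntegrand (n : ℕ) (s p : ℝ) (u : Euc n → ℝ) (z : Euc n × Euc n) : ℝ :=
  |u z.1 - u z.2| ^ p / ‖z.1 - z.2‖ ^ ((n : ℝ) + s * p)

section gagliardoIntegrand

variable {n : ℕ} {s p : ℝ} {Ω : Set (Euc n)} {u : Euc n → ℝ}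

theorem gagliardoIntegrand_nonneg (z : Euc n × Euc n) : 0 ≤ gagliardoIntegrand n s p u z :=
  div_nonneg (Real.rpow_nonneg (abs_nonneg _) _) (Real.rpow_nonneg (norm_nonneg _) _)

theorem gagliardo_nonneg : 0 ≤ gagliardo n s p Ω u :=
  integral_nonneg gagliardoIntegrand_nonneg

theorem gagliardoIntegrand_abs_le (hp : 0 ≤ p) (z : Euc n × Euc n) :
    gagliardoIntegrand n s p (fun x => |u x|) z ≤ gagliardoIntegrand n s p u z :=
  div_le_div_of_nonneg_right
    (Real.rpow_le_rpow (abs_nonneg _) (abs_abs_sub_abs_le_abs_sub _ _) hp)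
    (Real.rpow_nonneg (norm_nonneg _) _)

theorem gagliardoIntegrand_abs_lt (hp : 0 < p) {x y : Euc n} (hx : 0 < u x) (hy : u y < 0) :
    gagliardoIntegrand n s p (fun x => |u x|) (x, y) < gagliardoIntegrand n s p u (x, y) := by
  have hxy : x ≠ y := by rintro rfl; exact hx.not_gt hy
  refine div_lt_div_of_pos_right
    (Real.rpow_lt_rpow (abs_nonneg _) (abs_abs_sub_abs_lt_abs_sub hx hy) hp) ?_
  exact Real.rpow_pos_of_pos (norm_pos_iff.2 (sub_ne_zero.2 hxy)) _

theorem aestronglyMeasurable_gagliardoIntegrand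
    (hu : AEStronglyMeasurable u (volume.restrict Ω)) :
    AEStronglyMeasurable (gagliardoIntegrand n s p u) (volume.restrict (Ω ×ˢ Ω)) := by
  rw [Measure.volume_eq_prod, ← Measure.prod_restrict]
  have hdiff : AEMeasurable (fun z : Euc n × Euc n => u z.1 - u z.2)
      ((volume.restrict Ω).prod (volume.restrict Ω)) :=
    (hu.aemeasurable.comp_quasiMeasurePreserving Measure.quasiMeasurePreserving_fst).sub
      (hu.aemeasurable.comp_quasiMeasurePreserving Measure.quasiMeasurePreserving_snd)
  have hdist : Measurable fun z : Euc n × Euc n => ‖z.1 - z.2‖ ^ ((n : ℝ) + s * p) :=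
    (measurable_fst.sub measurable_snd).norm.pow_const _
  exact ((hdiff.abs.pow_const p).div hdist.aemeasurable).aestronglyMeasurable

theorem inFracSobolev.abs (hp : 0 ≤ p)
    (hu : inFracSobolev n s p Ω u) : inFracSobolev n s p Ω (fun x => |u x|) := by
  have hm := hu.1.aestronglyMeasurable
  refine ⟨by simpa only [Real.norm_eq_abs] using hu.1.norm, ?_⟩
  change Integrable (gagliardoIntegrand n s p fun x => |u x|) (volume.restrict (Ω ×ˢ Ω))
  refine Integrable.mono (g := gagliardoIntegrand n s p u) hu.2 ?_
    (Eventually.of_forall fun z => ?_)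
  · exact aestronglyMeasurable_gagliardoIntegrand (continuous_abs.comp_aestronglyMeasurable hm)
  · rw [Real.norm_of_nonneg (gagliardoIntegrand_nonneg z),
      Real.norm_of_nonneg (gagliardoIntegrand_nonneg z)]
    exact gagliardoIntegrand_abs_le hp z

theorem gagliardo_abs_lt (hp : 0 < p)
    (hu : inFracSobolev n s p Ω u)
    (hpos : 0 < volume {x ∈ Ω | 0 < u x}) (hneg : 0 < volume {x ∈ Ω | u x < 0}) :
    gagliardo n s p Ω (fun x => |u x|) < gagliardo n s p Ω u := by
  refine integral_lt_integral_of_ae_le_of_measure_setOf_lt_ne_zero (hu.abs hp.le).2 hu.2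
    (Eventually.of_forall (gagliardoIntegrand_abs_le hp.le)) (pos_iff_ne_zero.1 ?_)
  have hsub : {x ∈ Ω | 0 < u x} ×ˢ {x ∈ Ω | u x < 0} ⊆
      {z | gagliardoIntegrand n s p (fun x => |u x|) z < gagliardoIntegrand n s p u z} ∩
        Ω ×ˢ Ω :=
    fun z ⟨⟨hx, hux⟩, ⟨hy, huy⟩⟩ => ⟨gagliardoIntegrand_abs_lt hp hux huy, hx, hy⟩
  calc 0 < volume {x ∈ Ω | 0 < u x} * volume {x ∈ Ω | u x < 0} :=
        ENNReal.mul_pos hpos.ne' hneg.ne'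
    _ = volume ({x ∈ Ω | 0 < u x} ×ˢ {x ∈ Ω | u x < 0}) := by
        rw [Measure.volume_eq_prod, Measure.prod_prod]
    _ ≤ _ := (measure_mono hsub).trans (Measure.le_restrict_apply _ _)

end gagliardoIntegrand

theorem lambdaS_le {n : ℕ} {s p : ℝ} {Ω A : Set (Euc n)} {v : Euc n → ℝ}
    (hv : inFracSobolev n s p Ω v) (hvA : ∀ᵐ x ∂(volume.restrict A), v x = 0)
    (hvpos : 0 < ∫ x in Ω, |v x| ^ p) :
    lambdaS n s p Ω A ≤ (gagliardo n s p Ω v / 2) / ∫ x in Ω, |v x| ^ p := by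
  refine csInf_le ⟨0, ?_⟩ ⟨v, hv, hvA, hvpos, rfl⟩
  rintro r ⟨w, -, -, hwpos, rfl⟩
  exact div_nonneg (div_nonneg gagliardo_nonneg zero_le_two) hwpos.le

theorem extremal_constant_sign_general
    (n : ℕ) (s p : ℝ) (hp : 1 < p)
    (Ω : Set (Euc n)) (hΩo : IsOpen Ω)
    (A : Set (Euc n))
    (u : Euc n → ℝ) (hu : inFracSobolev n s p Ω u)
    (huA : ∀ᵐ x ∂(volume.restrict A), u x = 0)
    (hune : 0 < ∫ x in Ω, |u x| ^ p)
    (hext : gagliardo n s p Ω u / 2 = lambdaS n s p Ω A * ∫ x in Ω, |u x| ^ p) :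
    ((∀ᵐ x ∂(volume.restrict Ω), 0 ≤ u x) ∨ (∀ᵐ x ∂(volume.restrict Ω), u x ≤ 0)) ∧
    (0 < volume {x ∈ Ω | 0 < u x} → 0 < volume {x ∈ Ω | u x < 0} →
      gagliardo n s p Ω (fun x => |u x|) < gagliardo n s p Ω u) := by
  have hp0 : 0 < p := zero_lt_one.trans hp
  refine ⟨?_, gagliardo_abs_lt hp0 hu⟩
  by_contra hsign
  rw [not_or] at hsign
  have hneg := measure_pos_of_not_ae_restrict hΩo.measurableSet hsign.1
  have hpos := measure_pos_of_not_ae_restrict hΩo.measurableSet hsign.2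
  simp only [not_le] at hneg hpos
  have hlt := gagliardo_abs_lt hp0 hu hpos hneg
  have hle := lambdaS_le (A := A) (hu.abs hp0.le) (huA.mono fun x hx => by simp [hx])
    (by simpa only [abs_abs] using hune)
  simp only [abs_abs] at hle
  rw [le_div_iff₀ hune, ← hext] at hle
  linarith

/-- An extremal for `λ_s(A)` has constant sign; more precisely, if `u` changes sign on a
set of positive measure then `[|u|]_{s,p}^p < [u]_{s,p}^p`. -/
theorem extremal_constant_sign
    (n : ℕ) (s p : ℝ) (hs0 : 0 < s) (hs1 : s < 1) (hp : 1 < p)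
    (Ω : Set (Euc n)) (hΩo : IsOpen Ω) (hΩb : Bornology.IsBounded Ω)
    (A : Set (Euc n)) (hA : MeasurableSet A) (hAΩ : A ⊆ Ω) (hApos : 0 < volume A)
    (u : Euc n → ℝ) (hu : inFracSobolev n s p Ω u)
    (huA : ∀ᵐ x ∂(volume.restrict A), u x = 0)
    (hune : 0 < ∫ x in Ω, |u x| ^ p)
    (hext : gagliardo n s p Ω u / 2 = lambdaS n s p Ω A * ∫ x in Ω, |u x| ^ p) :
    ((∀ᵐ x ∂(volume.restrict Ω), 0 ≤ u x) ∨ (∀ᵐ x ∂(volume.restrict Ω), u x ≤ 0)) ∧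
    (0 < volume {x ∈ Ω | 0 < u x} → 0 < volume {x ∈ Ω | u x < 0} →
      gagliardo n s p Ω (fun x => |u x|) < gagliardo n s p Ω u) :=
  extremal_constant_sign_general n s p hp Ω hΩo A u hu huA hune hext
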